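/- Let d ≥ 2 and let C ⊂ ℝ^d be a strictly convex analytic body with 0 in its interior, with support function P(t) = sup_{x∈C}(t,x). Set f(δ) = P(1,δ,0,…,0) and f̃(δ) = P(−1,−δ,0,…,0), and assume there exist δ, δ′ ∈ ℝ with f″(δ) f̃″(δ′) ≠ f̃″(δ) f″(δ′). Let m_1, …, m_K be pairwise distinct elements of 𝒵 ⊂ ℤ^{d+1} and let l_1, …, l_K, l̃_1, …, l̃_K be real numbers. If Σ_{i=1}^K l_i · P( (m_i,x), (m_i,y), 0, …, 0 ) + Σ_{i=1}^K l̃_i · P( −(m_i,x), −(m_i,y), 0, …, 0 ) = 0 for all x, y ∈ ℝ^{d+1}, then l_i = l̃_i = 0 for all i = 1, …, K. -/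

import Mathlib

open MeasureTheory Filter Pointwise
open scoped ENNReal RealInnerProductSpace Real

noncomputable section

abbrev Torus (d : ℕ) := Fin d → AddCircle (1 : ℝ)

def torusProj {d : ℕ} (v : EuclideanSpace ℝ (Fin d)) : Torus d :=
  fun i => (v i : AddCircle (1 : ℝ))

def suppFn {d : ℕ} (C : Set (EuclideanSpace ℝ (Fin d))) (t : EuclideanSpace ℝ (Fin d)) : ℝ :=
  sSup ((fun x => (inner ℝ t x : ℝ)) '' C)

structure StrictlyConvexAnalyticBody (d : ℕ) where
  carrier : Set (EuclideanSpace ℝ (Fin d))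
  isCompact : IsCompact carrier
  convex : Convex ℝ carrier
  nonemptyInterior : (interior carrier).Nonempty
  strictConvex : StrictConvex ℝ carrier
  analyticSupport : AnalyticOnNhd ℝ (suppFn carrier) {(0 : EuclideanSpace ℝ (Fin d))}ᶜ
  posCurvature : ∀ t w : EuclideanSpace ℝ (Fin d), t ≠ 0 → w ≠ 0 → (inner ℝ t w : ℝ) = 0 →
    0 < iteratedDeriv 2 (fun s : ℝ => suppFn carrier (t + s • w)) 0

def discrepancy (d : ℕ) (C : Set (EuclideanSpace ℝ (Fin d))) (r : ℝ)
    (α x : Torus d) (N : ℕ) : ℝ :=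
  (∑ n ∈ Finset.range N,
    Set.indicator (torusProj '' (r • C)) (fun _ => (1:ℝ)) (x + n • α))
    - N * (volume (r • C)).toReal

def lamMeasure (d : ℕ) (a b : ℝ) : Measure (ℝ × Torus d × Torus d) :=
  ((volume (Set.Icc a b))⁻¹ • volume.restrict (Set.Icc a b)).prod
    ((volume : Measure (Torus d)).prod (volume : Measure (Torus d)))


/-- The vector `(u, v, 0, …, 0)` of `ℝ^d`. -/
def pairVec (d : ℕ) (u v : ℝ) : EuclideanSpace ℝ (Fin d) :=
  (EuclideanSpace.equiv (Fin d) ℝ).symm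
    (fun i => if (i : ℕ) = 0 then u else if (i : ℕ) = 1 then v else 0)

/-- The set `𝒵` of primitive vectors of `ℤ^{d+1}` whose first nonzero coordinate
is positive. -/
def ZSet (d : ℕ) : Set (Fin (d+1) → ℤ) :=
  {m | Finset.univ.gcd m = 1 ∧ ∀ i, (∀ j, j < i → m j = 0) → 0 ≤ m i}

def dotInt {n : ℕ} (m : Fin n → ℤ) (x : Fin n → ℝ) : ℝ := ∑ j, (m j : ℝ) * x j

/-!
Fix `i₀` and put `x = x₀ + ε x₁`, `y = t x₁`, where `(m_{i₀}, x₀) = 0`, `(m_{i₀}, x₁) = 1` and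
`(m_j, x₀) ≠ 0` for `j ≠ i₀`; such an `x₀` exists because distinct elements of `𝒵` are not
proportional and a real vector space is not a finite union of proper subspaces. By homogeneity of
`P`, every term of the identity is a rescaled copy `ρ φ(κ t)` of a fixed profile `φ`, and only the
`i₀`-th one degenerates as `ε → 0⁺` (with `ρ = ε`, `κ = ε⁻¹`). Its second derivative at `t = εσ`
therefore blows up like `ε⁻¹ (l_{i₀} f''(σ) + l̃_{i₀} f̃''(σ))` while the others stay bounded, so
`l_{i₀} f'' + l̃_{i₀} f̃'' ≡ 0`; evaluating at `δ` and `δ'` gives `l_{i₀} = l̃_{i₀} = 0`.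
-/

open scoped Topology

section DotInt

variable {n : ℕ}

def dotIntLinear (m : Fin n → ℤ) : (Fin n → ℝ) →ₗ[ℝ] ℝ :=
  dotProductBilin ℝ ℝ (fun j => (m j : ℝ))

@[simp]
lemma dotIntLinear_apply (m : Fin n → ℤ) (x : Fin n → ℝ) : dotIntLinear m x = dotInt m x := rfl

lemma dotInt_add (m : Fin n → ℤ) (x y : Fin n → ℝ) :
    dotInt m (x + y) = dotInt m x + dotInt m y :=
  map_add (dotIntLinear m) x y

lemma dotInt_sub (m : Fin n → ℤ) (x y : Fin n → ℝ) :
    dotInt m (x - y) = dotInt m x - dotInt m y :=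
  map_sub (dotIntLinear m) x y

lemma dotInt_smul (m : Fin n → ℤ) (r : ℝ) (x : Fin n → ℝ) : dotInt m (r • x) = r * dotInt m x :=
  map_smul (dotIntLinear m) r x

lemma dotInt_single (m : Fin n → ℤ) (k : Fin n) (r : ℝ) : dotInt m (Pi.single k r) = m k * r := by
  simp [dotInt, Pi.single_apply]

lemma exists_dotInt_eq_one {m : Fin n → ℤ} (hm : m ≠ 0) : ∃ x, dotInt m x = 1 := by
  obtain ⟨k, hk⟩ := Function.ne_iff.1 hm
  refine ⟨Pi.single k (m k : ℝ)⁻¹, ?_⟩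
  rw [dotInt_single]
  exact mul_inv_cancel₀ (by exact_mod_cast hk)

end DotInt

lemma exists_forall_apply_ne_zero {k E ι : Type*} [DivisionRing k] [Infinite k] [AddCommGroup E]
    [Module k E] [Finite ι] {φ : ι → E →ₗ[k] k} (hφ : ∀ i, φ i ≠ 0) : ∃ v, ∀ i, φ i v ≠ 0 := by
  by_contra! hv
  obtain ⟨i, hi⟩ := Subspace.exists_eq_top_of_iUnion_eq_univ (p := fun i => LinearMap.ker (φ i))
    (Set.eq_univ_of_forall fun v => Set.mem_iUnion.2 (hv v))
  exact hφ i (LinearMap.ker_eq_top.1 hi)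

namespace ZSet

variable {d : ℕ} {m m' : Fin (d+1) → ℤ}

lemma ne_zero (hm : m ∈ ZSet d) : m ≠ 0 := by
  rintro rfl
  simpa [Finset.gcd_eq_zero_iff.2] using hm.1

lemma neg_notMem (hm : m ∈ ZSet d) : -m ∉ ZSet d := by
  intro hm'
  refine ZSet.ne_zero hm (funext fun i => ?_)
  induction i using WellFoundedLT.induction with
  | ind i ih =>
    have h₁ := hm.2 i ih
    have h₂ := hm'.2 i fun j hj => by simp [ih j hj]
    simp only [Pi.neg_apply] at h₂
    simp only [Pi.zero_apply]
    omega

lemma eq_of_mul_eq_mul (hm : m ∈ ZSet d) (hm' : m' ∈ ZSet d) {k : Fin (d+1)} (hk : m k ≠ 0)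
    (h : ∀ j, m k * m' j = m' k * m j) : m' = m := by
  have hgcd : |m k| = |m' k| := by
    have := congrArg (Finset.univ.gcd ·) (funext h : (fun j => m k * m' j) = fun j => m' k * m j)
    simpa [Finset.gcd_mul_left, hm.1, hm'.1, Int.abs_eq_normalize] using this
  rcases abs_eq_abs.1 hgcd with hk' | hk'
  · exact funext fun j => mul_left_cancel₀ hk (by rw [h j, hk'])
  · refine absurd ?_ (ZSet.neg_notMem hm)
    convert hm' using 1
    exact funext fun j => mul_left_cancel₀ hk (by rw [h j, Pi.neg_apply, hk']; ring)

lemma exists_dotInt_eq_zero_and_ne_zero (hm : m ∈ ZSet d) (hm' : m' ∈ ZSet d) (hne : m ≠ m') :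
    ∃ v, dotInt m v = 0 ∧ dotInt m' v ≠ 0 := by
  by_contra! hker
  obtain ⟨x₁, hx₁⟩ := exists_dotInt_eq_one (ZSet.ne_zero hm)
  have hprop : ∀ v, dotInt m' v = dotInt m v * dotInt m' x₁ := fun v => by
    have := hker (v - dotInt m v • x₁) (by rw [dotInt_sub, dotInt_smul, hx₁, mul_one, sub_self])
    rwa [dotInt_sub, dotInt_smul, sub_eq_zero] at this
  obtain ⟨k, hk⟩ := Function.ne_iff.1 (ZSet.ne_zero hm)
  refine hne (eq_of_mul_eq_mul hm hm' hk fun j => ?_).symm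
  have hj := hprop (Pi.single j 1)
  have hk' := hprop (Pi.single k 1)
  simp only [dotInt_single, mul_one] at hj hk'
  exact_mod_cast (show (m k : ℝ) * m' j = m' k * m j by rw [hj, hk']; ring)

end ZSet

lemma exists_dotInt_eq_zero_and_forall_ne_zero {d : ℕ} {ι : Type*} [Finite ι]
    {m : ι → Fin (d+1) → ℤ} (hm : ∀ i, m i ∈ ZSet d) (hinj : Function.Injective m) (i₀ : ι) :
    ∃ x, dotInt (m i₀) x = 0 ∧ ∀ j ≠ i₀, dotInt (m j) x ≠ 0 := by
  let V := LinearMap.ker (dotIntLinear (m i₀))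
  have hφ : ∀ j : {j // j ≠ i₀}, (dotIntLinear (m j)).domRestrict V ≠ 0 := fun j => by
    obtain ⟨v, hv, hv'⟩ :=
      ZSet.exists_dotInt_eq_zero_and_ne_zero (hm i₀) (hm j) fun h => j.2 (hinj h).symm
    exact fun h0 => hv' (LinearMap.congr_fun h0 ⟨v, by simpa [V] using hv⟩)
  obtain ⟨⟨x, hx⟩, hne⟩ := exists_forall_apply_ne_zero hφ
  exact ⟨x, by simpa [V] using hx, fun j hj => by simpa using hne ⟨j, hj⟩⟩

section SupportFunction

variable {d : ℕ}

lemma suppFn_smul (s : Set (EuclideanSpace ℝ (Fin d))) {r : ℝ} (hr : 0 ≤ r)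
    (v : EuclideanSpace ℝ (Fin d)) : suppFn s (r • v) = r * suppFn s v := by
  rw [suppFn, suppFn, ← smul_eq_mul, ← Real.sSup_smul_of_nonneg hr, ← Set.image_smul,
    Set.image_image]
  simp only [real_inner_smul_left, smul_eq_mul]

lemma pairVec_apply (u v : ℝ) (i : Fin d) :
    pairVec d u v i = if (i : ℕ) = 0 then u else if (i : ℕ) = 1 then v else 0 := rfl

lemma smul_pairVec (r u v : ℝ) : r • pairVec d u v = pairVec d (r * u) (r * v) := by
  ext i
  simp only [PiLp.smul_apply, pairVec_apply, smul_eq_mul]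
  split_ifs <;> ring

lemma neg_pairVec (u v : ℝ) : -pairVec d u v = pairVec d (-u) (-v) := by
  simpa using smul_pairVec (d := d) (-1) u v

lemma pairVec_ne_zero (hd : 0 < d) {u : ℝ} (hu : u ≠ 0) (v : ℝ) : pairVec d u v ≠ 0 := by
  intro h
  exact hu (by simpa [pairVec_apply] using congrArg (· ⟨0, hd⟩) h)

lemma pairVec_eq_add_smul (u v : ℝ) : pairVec d u v = pairVec d u 0 + v • pairVec d 0 1 := by
  ext i
  simp only [pairVec_apply, PiLp.add_apply, PiLp.smul_apply, smul_eq_mul]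
  split_ifs <;> ring

lemma contDiff_suppFn_pairVec (C : StrictlyConvexAnalyticBody d) (hd : 0 < d) {u : ℝ} (hu : u ≠ 0)
    {n : WithTop ℕ∞} : ContDiff ℝ n fun v => suppFn C.carrier (pairVec d u v) := by
  refine AnalyticOnNhd.contDiff fun v _ => ?_
  refine (C.analyticSupport _ (pairVec_ne_zero hd hu v)).comp ?_
  rw [funext (pairVec_eq_add_smul (d := d) u)]
  fun_prop

def suppFnComb (s : Set (EuclideanSpace ℝ (Fin d))) (l l' x y : ℝ) : ℝ :=
  l * suppFn s (pairVec d x y) + l' * suppFn s (pairVec d (-x) (-y))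

lemma suppFnComb_mul (s : Set (EuclideanSpace ℝ (Fin d))) (l l' : ℝ) {r : ℝ} (hr : 0 ≤ r)
    (x y : ℝ) : suppFnComb s l l' (r * x) (r * y) = r * suppFnComb s l l' x y := by
  simp only [suppFnComb, ← smul_pairVec, ← mul_neg, suppFn_smul s hr]
  ring

lemma contDiff_suppFnComb (C : StrictlyConvexAnalyticBody d) (hd : 0 < d) (l l' : ℝ) {x : ℝ}
    (hx : x ≠ 0) {n : WithTop ℕ∞} : ContDiff ℝ n (suppFnComb C.carrier l l' x) :=
  (contDiff_const.mul (contDiff_suppFn_pairVec C hd hx)).add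
    (contDiff_const.mul ((contDiff_suppFn_pairVec C hd (neg_ne_zero.2 hx)).comp contDiff_neg))

lemma iteratedDeriv_two_suppFnComb_one (C : StrictlyConvexAnalyticBody d) (hd : 0 < d)
    (l l' σ : ℝ) : iteratedDeriv 2 (suppFnComb C.carrier l l' 1) σ =
      l * iteratedDeriv 2 (fun u => suppFn C.carrier (pairVec d 1 u)) σ +
        l' * iteratedDeriv 2 (fun u => suppFn C.carrier (-pairVec d 1 u)) σ := by
  have hf : ContDiff ℝ 2 fun u => suppFn C.carrier (pairVec d 1 u) :=
    contDiff_suppFn_pairVec C hd one_ne_zero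
  have hg : ContDiff ℝ 2 fun u => suppFn C.carrier (-pairVec d 1 u) := by
    simp only [neg_pairVec]
    exact (contDiff_suppFn_pairVec C hd (neg_ne_zero.2 one_ne_zero)).comp contDiff_neg
  have hcomb : suppFnComb C.carrier l l' 1 = fun u => l * suppFn C.carrier (pairVec d 1 u) +
      l' * suppFn C.carrier (-pairVec d 1 u) :=
    funext fun u => by rw [neg_pairVec]; rfl
  rw [hcomb, iteratedDeriv_fun_add (contDiff_const.mul hf).contDiffAt
      (contDiff_const.mul hg).contDiffAt, iteratedDeriv_const_mul_field,
    iteratedDeriv_const_mul_field]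

end SupportFunction

section Rescaling

variable {ι : Type*} [Fintype ι]

lemma sum_iteratedDeriv_comp_mul_eq_zero {𝕜 : Type*} [NontriviallyNormedField 𝕜] {n : ℕ}
    {φ : ι → 𝕜 → 𝕜} (hφ : ∀ j, ContDiff 𝕜 n (φ j)) {w r : ι → 𝕜}
    (h : ∀ t, ∑ j, w j * φ j (r j * t) = 0) (t : 𝕜) :
    ∑ j, w j * r j ^ n * iteratedDeriv n (φ j) (r j * t) = 0 := by
  have hsum : iteratedDeriv n (fun t => ∑ j, w j * φ j (r j * t)) t = 0 := by
    simp [funext h]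
  have hterm : ∀ j, ContDiff 𝕜 n fun t => w j * φ j (r j * t) := fun j =>
    contDiff_const.mul ((hφ j).comp (contDiff_const.mul contDiff_id))
  rw [iteratedDeriv_fun_sum fun j _ => (hterm j).contDiffAt] at hsum
  rw [← hsum]
  refine Finset.sum_congr rfl fun j _ => ?_
  rw [iteratedDeriv_const_mul_field, iteratedDeriv_comp_const_mul (hφ j), mul_assoc]

lemma iteratedDeriv_two_eq_zero_of_eventually_sum_eq_zero {φ : ι → ℝ → ℝ}
    (hφ : ∀ j, ContDiff ℝ 2 (φ j)) {ρ κ : ι → ℝ → ℝ} {i₀ : ι} (hρ₀ : ∀ ε, ρ i₀ ε = ε)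
    (hκ₀ : ∀ ε, κ i₀ ε = ε⁻¹) (hρ : ∀ j ≠ i₀, ContinuousAt (ρ j) 0)
    (hκ : ∀ j ≠ i₀, ContinuousAt (κ j) 0)
    (h : ∀ᶠ ε in 𝓝[>] 0, ∀ t, ∑ j, ρ j ε * φ j (κ j ε * t) = 0) (σ : ℝ) :
    iteratedDeriv 2 (φ i₀) σ = 0 := by
  classical
  set T : ℝ → ι → ℝ := fun ε j => ρ j ε * κ j ε ^ 2 * iteratedDeriv 2 (φ j) (κ j ε * (ε * σ))
  have hT : ContinuousAt (fun ε => ∑ j ∈ Finset.univ.erase i₀, T ε j) 0 := by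
    refine tendsto_finsetSum _ fun j hj => ?_
    have hj := Finset.ne_of_mem_erase hj
    exact ((hρ j hj).mul ((hκ j hj).pow 2)).mul
      (((hφ j).continuous_iteratedDeriv 2 le_rfl).continuousAt.comp
        ((hκ j hj).mul (continuousAt_id.mul continuousAt_const)))
  have heq : ∀ᶠ ε in 𝓝[>] 0,
      -(ε * ∑ j ∈ Finset.univ.erase i₀, T ε j) = iteratedDeriv 2 (φ i₀) σ := by
    filter_upwards [h, self_mem_nhdsWithin] with ε hε (hε₀ : 0 < ε)
    have hsum : T ε i₀ + ∑ j ∈ Finset.univ.erase i₀, T ε j = 0 := by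
      rw [Finset.add_sum_erase _ _ (Finset.mem_univ i₀)]
      exact sum_iteratedDeriv_comp_mul_eq_zero hφ hε (ε * σ)
    have hi₀ : ε * T ε i₀ = iteratedDeriv 2 (φ i₀) σ := by
      simp only [T, hρ₀, hκ₀]
      field_simp
    rw [← hi₀]
    linear_combination -ε * hsum
  have hlim : Tendsto (fun ε => -(ε * ∑ j ∈ Finset.univ.erase i₀, T ε j)) (𝓝 0)
      (𝓝 (-(0 * ∑ j ∈ Finset.univ.erase i₀, T 0 j))) := (continuousAt_id.mul hT).neg
  rw [zero_mul, neg_zero] at hlim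
  exact tendsto_const_nhds_iff.1 ((hlim.mono_left nhdsWithin_le_nhds).congr' heq)

lemma iteratedDeriv_two_eq_zero_of_sum_homogeneous_eq_zero {H : ι → ℝ → ℝ → ℝ}
    (hH : ∀ j, ∀ r ≥ 0, ∀ x y, H j (r * x) (r * y) = r * H j x y)
    (hH' : ∀ j, ∀ x ≠ 0, ContDiff ℝ 2 (H j x)) {a c : ι → ℝ} {i₀ : ι}
    (ha₀ : a i₀ = 0) (hc₀ : c i₀ = 1) (ha : ∀ j ≠ i₀, a j ≠ 0)
    (h : ∀ ε t, ∑ j, H j (a j + ε * c j) (t * c j) = 0) (σ : ℝ) :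
    iteratedDeriv 2 (H i₀ 1) σ = 0 := by
  classical
  -- For small `ε > 0`, homogeneity with `ρ = (a j + ε c j) / a' j > 0` turns the `j`-th term
  -- into `ρ * H j (a' j) (c j / ρ * t)`.
  set a' : ι → ℝ := fun j => if j = i₀ then 1 else a j
  have ha' : ∀ j, a' j ≠ 0 := fun j => by
    by_cases hj : j = i₀ <;> simp [a', hj, ha]
  set ρ : ι → ℝ → ℝ := fun j ε => (a j + ε * c j) / a' j
  have hρ : ∀ j, ContinuousAt (ρ j) 0 := fun j => by fun_prop
  have hρ₁ : ∀ j ≠ i₀, ρ j 0 = 1 := fun j hj => by simp [ρ, a', hj, ha j hj]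
  have hpos : ∀ᶠ ε in 𝓝[>] 0, ∀ j, 0 < ρ j ε := by
    refine eventually_all.2 fun j => ?_
    by_cases hj : j = i₀
    · filter_upwards [self_mem_nhdsWithin] with ε (hε : 0 < ε)
      simpa [ρ, a', hj, ha₀, hc₀] using hε
    · exact nhdsWithin_le_nhds <|
        (hρ j).eventually (lt_mem_nhds (by rw [hρ₁ j hj]; exact one_pos))
  suffices hsum : ∀ᶠ ε in 𝓝[>] 0, ∀ t, ∑ j, ρ j ε * H j (a' j) (c j / ρ j ε * t) = 0 by
    have := iteratedDeriv_two_eq_zero_of_eventually_sum_eq_zero (i₀ := i₀) (ρ := ρ)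
      (κ := fun j ε => c j / ρ j ε) (fun j => hH' j _ (ha' j))
      (fun ε => by simp [ρ, a', ha₀, hc₀]) (fun ε => by simp [ρ, a', ha₀, hc₀])
      (fun j _ => hρ j)
      (fun j hj => continuousAt_const.div (hρ j) (by rw [hρ₁ j hj]; exact one_ne_zero)) hsum σ
    simpa [a'] using this
  filter_upwards [hpos] with ε hε t
  rw [← h ε t]
  refine Finset.sum_congr rfl fun j _ => ?_
  rw [← hH j _ (hε j).le]
  congr 1
  · exact div_mul_cancel₀ _ (ha' j)
  · field_simp [(hε j).ne']

end Rescaling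

lemma eq_zero_and_eq_zero_of_det_ne_zero {R : Type*} [CommRing R] [NoZeroDivisors R]
    {a b a' b' u v : R} (hdet : a * b' ≠ b * a') (h : u * a + v * b = 0)
    (h' : u * a' + v * b' = 0) : u = 0 ∧ v = 0 := by
  have hdet' : a * b' - b * a' ≠ 0 := sub_ne_zero.2 hdet
  have hu : u * (a * b' - b * a') = 0 := by linear_combination b' * h - b * h'
  have hv : v * (a * b' - b * a') = 0 := by linear_combination a * h' - a' * h
  exact ⟨(mul_eq_zero.1 hu).resolve_right hdet', (mul_eq_zero.1 hv).resolve_right hdet'⟩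

theorem support_function_combinations_independent_nonsymmetric_general
    (d : ℕ) (hd : 2 ≤ d) (C : StrictlyConvexAnalyticBody d)
    (hasym : ∃ δ δ' : ℝ,
      iteratedDeriv 2 (fun u : ℝ => suppFn C.carrier (pairVec d 1 u)) δ *
          iteratedDeriv 2 (fun u : ℝ => suppFn C.carrier (-pairVec d 1 u)) δ' ≠
        iteratedDeriv 2 (fun u : ℝ => suppFn C.carrier (-pairVec d 1 u)) δ *
          iteratedDeriv 2 (fun u : ℝ => suppFn C.carrier (pairVec d 1 u)) δ')
    (K : ℕ) (m : Fin K → (Fin (d+1) → ℤ)) (hm : ∀ i, m i ∈ ZSet d)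
    (hinj : Function.Injective m) (l ltilde : Fin K → ℝ)
    (h : ∀ x y : Fin (d+1) → ℝ,
      (∑ i, l i * suppFn C.carrier (pairVec d (dotInt (m i) x) (dotInt (m i) y))) +
        (∑ i, ltilde i *
          suppFn C.carrier (pairVec d (-dotInt (m i) x) (-dotInt (m i) y))) = 0) :
    ∀ i, l i = 0 ∧ ltilde i = 0 := by
  intro i₀
  have hd' : 0 < d := by omega
  obtain ⟨x₁, hx₁⟩ := exists_dotInt_eq_one (ZSet.ne_zero (hm i₀))
  obtain ⟨x₀, hx₀, hx₀ne⟩ := exists_dotInt_eq_zero_and_forall_ne_zero hm hinj i₀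
  have hline : ∀ ε t : ℝ, ∑ j, suppFnComb C.carrier (l j) (ltilde j)
      (dotInt (m j) x₀ + ε * dotInt (m j) x₁) (t * dotInt (m j) x₁) = 0 := fun ε t => by
    simpa [suppFnComb, Finset.sum_add_distrib, dotInt_add, dotInt_smul] using
      h (x₀ + ε • x₁) (t • x₁)
  have hcomb : ∀ σ, l i₀ * iteratedDeriv 2 (fun u => suppFn C.carrier (pairVec d 1 u)) σ +
      ltilde i₀ * iteratedDeriv 2 (fun u => suppFn C.carrier (-pairVec d 1 u)) σ = 0 :=
    fun σ => by
      rw [← iteratedDeriv_two_suppFnComb_one C hd']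
      exact iteratedDeriv_two_eq_zero_of_sum_homogeneous_eq_zero
        (a := fun j => dotInt (m j) x₀) (c := fun j => dotInt (m j) x₁)
        (fun _ _ hr x y => suppFnComb_mul _ _ _ hr x y)
        (fun _ _ hx => contDiff_suppFnComb C hd' _ _ hx) hx₀ hx₁ hx₀ne hline σ
  obtain ⟨δ, δ', hdet⟩ := hasym
  exact eq_zero_and_eq_zero_of_det_ne_zero hdet (hcomb δ) (hcomb δ')

theorem support_function_combinations_independent_nonsymmetric
    (d : ℕ) (hd : 2 ≤ d) (C : StrictlyConvexAnalyticBody d)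
    (h0 : (0 : EuclideanSpace ℝ (Fin d)) ∈ interior C.carrier)
    (hasym : ∃ δ δ' : ℝ,
      iteratedDeriv 2 (fun u : ℝ => suppFn C.carrier (pairVec d 1 u)) δ *
          iteratedDeriv 2 (fun u : ℝ => suppFn C.carrier (-pairVec d 1 u)) δ' ≠
        iteratedDeriv 2 (fun u : ℝ => suppFn C.carrier (-pairVec d 1 u)) δ *
          iteratedDeriv 2 (fun u : ℝ => suppFn C.carrier (pairVec d 1 u)) δ')
    (K : ℕ) (m : Fin K → (Fin (d+1) → ℤ)) (hm : ∀ i, m i ∈ ZSet d)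
    (hinj : Function.Injective m) (l ltilde : Fin K → ℝ)
    (h : ∀ x y : Fin (d+1) → ℝ,
      (∑ i, l i * suppFn C.carrier (pairVec d (dotInt (m i) x) (dotInt (m i) y))) +
        (∑ i, ltilde i *
          suppFn C.carrier (pairVec d (-dotInt (m i) x) (-dotInt (m i) y))) = 0) :
    ∀ i, l i = 0 ∧ ltilde i = 0 :=
  support_function_combinations_independent_nonsymmetric_general d hd C hasym K m hm hinj l ltilde h

end
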